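/- arXiv:1504.02805 — 3 statements merged into one kernel-verified Lean document; each statement's English description precedes it below -/
import Mathlib

section
/- For all h, g ∈ Q with h ≫ g there exists f ∈ Q such that h ≫ f and f ≫ g. -/
/-!
Fix a computable threshold sequence `d` witnessing `h ≫ g`. Build a computable, strictly
increasing scale `H` with `H (j + 1) ≥ h^[j + 1] (H j)` which at stage `j ≥ 1` also exceeds the
thresholds `d (j + 1)` and `d (j * (j + 3))`. Let `m n` be the largest `j ≤ n` with `H j < n`
(or `0`) and put `f n = g^[m n + 1] n`. Beyond `H k` we have `m n ≥ k`, so `f ≫ g`.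
Beyond `H 1` we have `H (m x) < x` with `m x ≥ 1`, so `f x = g^[m x + 1] x ≤ h x`.
Hence for `n > H (k + 2)` and `j = m n`, the first `k` points of the `f`-orbit of `n` lie below
its `h`-orbit, hence below `H (j + 2)`, where `m ≤ j + 2`; so
`f^[k] n ≤ g^[k * (j + 3)] n ≤ g^[j * (j + 3)] n ≤ h n`.
-/
/-- The class `Q` of nondecreasing computable functions `h : ω → [2, ∞)`
with `h n ≥ 2 ^ n` for all `n`. -/
def MemQ (h : ℕ → ℕ) : Prop :=
  Computable h ∧ Monotone h ∧ (∀ n, 2 ≤ h n) ∧ (∀ n, 2 ^ n ≤ h n)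

/-- `h ≫ g` : `h` dominates the iterates of `g` uniformly.  There is a computable
sequence `d` such that for all `k ≥ 1`, `h(n) ≥ g^(k)(n)` for all `n > d k`
(here `g^(k)` is the `k`-fold composition of `g` with itself, `g^(1) = g`). -/
def DominatesIterates (h g : ℕ → ℕ) : Prop :=
  ∃ d : ℕ → ℕ, Computable d ∧ ∀ k : ℕ, 1 ≤ k → ∀ n : ℕ, d k < n → g^[k] n ≤ h n

open Function

theorem Computable.nat_iterate {α β : Type*} [Primcodable α] [Primcodable β] {f : α → ℕ}
    {g : α → β} {h : α → β → β} (hf : Computable f) (hg : Computable g) (hh : Computable₂ h) :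
    Computable fun a => (h a)^[f a] (g a) :=
  (nat_rec hf hg (hh.comp fst (snd.comp snd)).to₂).of_eq fun a => by
    induction f a <;> simp [*, -iterate_succ, iterate_succ']

theorem Computable.nat_findGreatest {α : Type*} [Primcodable α] {f : α → ℕ}
    {p : α → ℕ → Prop} [DecidableRel p] (hf : Computable f)
    (hp : Computable₂ fun a n => decide (p a n)) :
    Computable fun a => (f a).findGreatest (p a) :=
  (nat_rec hf (const 0) (cond (hp.comp fst (succ.comp (fst.comp snd)))
    (succ.comp (fst.comp snd)) (snd.comp snd)).to₂).of_eq fun a => by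
      induction f a <;> simp [Nat.findGreatest, *]

theorem iterate_le_iterate_of_le_on_Ici {α : Type*} [Preorder α] {f h : α → α} {a : α}
    (hh : Monotone h) (hf : id ≤ f) (hfh : ∀ x ∈ Set.Ici a, f x ≤ h x) (i : ℕ) :
    f^[i] a ≤ h^[i] a := by
  induction i with
  | zero => exact le_rfl
  | succ i ih =>
    rw [iterate_succ_apply', iterate_succ_apply']
    exact (hfh _ (id_le_iterate_of_id_le hf i a)).trans (hh ih)

theorem MemQ.id_le {g : ℕ → ℕ} (hg : MemQ g) : id ≤ g :=
  fun n => Nat.lt_two_pow_self.le.trans (hg.2.2.2 n)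

section DiagIterate

variable {α : Type*} {g : α → α} {m : α → ℕ}

def diagIterate (g : α → α) (m : α → ℕ) (x : α) : α := g^[m x + 1] x

theorem id_le_diagIterate [Preorder α] (hg : id ≤ g) : id ≤ diagIterate g m :=
  fun x => id_le_iterate_of_id_le hg _ x

theorem iterate_diagIterate_le [Preorder α] (hg : Monotone g) (hid : id ≤ g) {c k : ℕ} {x : α}
    (hm : ∀ i < k, m ((diagIterate g m)^[i] x) < c) :
    (diagIterate g m)^[k] x ≤ g^[k * c] x := by
  induction k with
  | zero => simp
  | succ k ih =>
    set y := (diagIterate g m)^[k] x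
    calc (diagIterate g m)^[k + 1] x = g^[m y + 1] y := iterate_succ_apply' _ k x
      _ ≤ g^[c] y := monotone_iterate_of_id_le hid (hm k k.lt_succ_self) y
      _ ≤ g^[c] (g^[k * c] x) := hg.iterate c (ih fun i hi => hm i (hi.trans k.lt_succ_self))
      _ = g^[(k + 1) * c] x := by rw [← iterate_add_apply, Nat.succ_mul, add_comm]

end DiagIterate

theorem memQ_diagIterate {g m : ℕ → ℕ} (hg : MemQ g) (hmc : Computable m) (hm : Monotone m) :
    MemQ (diagIterate g m) := by
  have hid := hg.id_le
  obtain ⟨hgc, hgm, hg2, hgp⟩ := hg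
  refine ⟨?_, fun a b hab => ?_, fun n => ?_, fun n => ?_⟩
  · exact Computable.nat_iterate (Computable.succ.comp hmc) Computable.id
      (hgc.comp Computable.snd).to₂
  · exact (hgm.iterate _ hab).trans
      (monotone_iterate_of_id_le hid (Nat.succ_le_succ (hm hab)) b)
  · rw [diagIterate, iterate_succ_apply']
    exact hg2 _
  · calc 2 ^ n ≤ g^[1] n := hgp n
      _ ≤ diagIterate g m n := monotone_iterate_of_id_le hid (Nat.le_add_left 1 _) n

section SlowInv

variable {H : ℕ → ℕ} {k n : ℕ}

def slowInv (H : ℕ → ℕ) (n : ℕ) : ℕ := Nat.findGreatest (fun j => H j < n) n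

theorem computable_slowInv (hH : Computable H) : Computable (slowInv H) :=
  Computable.nat_findGreatest Computable.id
    (Primrec.nat_lt.decide.to_comp.comp (hH.comp Computable.snd) Computable.fst).to₂

theorem slowInv_mono : Monotone (slowInv H) :=
  fun _ _ hab => Nat.findGreatest_mono (fun _ hj => hj.trans_le hab) hab

theorem le_slowInv (hH : StrictMono H) (hk : H k < n) : k ≤ slowInv H n :=
  Nat.le_findGreatest ((hH.id_le k).trans hk.le) hk

theorem apply_slowInv_lt (hn : slowInv H n ≠ 0) : H (slowInv H n) < n :=
  Nat.findGreatest_of_ne_zero (P := fun j => H j < n) rfl hn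

theorem le_apply_slowInv_succ (hH : StrictMono H) (n : ℕ) : n ≤ H (slowInv H n + 1) := by
  by_contra! hlt
  exact (le_slowInv hH hlt).not_gt (Nat.lt_succ_self _)

theorem slowInv_le (hH : Monotone H) {t : ℕ} (hn : n ≤ H t) : slowInv H n ≤ t := by
  by_contra! hlt
  exact (apply_slowInv_lt (by omega)).not_ge (hn.trans (hH hlt.le))

end SlowInv

section Scale

variable {h d : ℕ → ℕ} {i j x : ℕ}

def scale (h d : ℕ → ℕ) : ℕ → ℕ
  | 0 => 0
  | j + 1 => h^[j + 1] (scale h d j) + d (j + 2) + d ((j + 1) * (j + 4)) + 1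

theorem computable_scale (hh : Computable h) (hd : Computable d) : Computable (scale h d) := by
  have add : Computable₂ ((· + ·) : ℕ → ℕ → ℕ) := Primrec.nat_add.to_comp
  have mul : Computable₂ ((· * ·) : ℕ → ℕ → ℕ) := Primrec.nat_mul.to_comp
  have step : Computable fun p : ℕ × ℕ =>
      h^[p.1 + 1] p.2 + d (p.1 + 2) + d ((p.1 + 1) * (p.1 + 4)) + 1 := by
    refine add.comp (add.comp (add.comp ?_ ?_) ?_) (Computable.const 1)
    · exact Computable.nat_iterate (Computable.succ.comp Computable.fst) Computable.snd
        (hh.comp Computable.snd).to₂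
    · exact hd.comp (Computable.succ.comp (Computable.succ.comp Computable.fst))
    · exact hd.comp (mul.comp (Computable.succ.comp Computable.fst)
        (add.comp Computable.fst (Computable.const 4)))
  refine (Computable.nat_rec Computable.id (Computable.const 0)
    (step.comp Computable.snd).to₂).of_eq fun j => ?_
  induction j with
  | zero => rfl
  | succ j ih => simp only [scale, ← ih]; rfl

theorem strictMono_scale (hh : id ≤ h) : StrictMono (scale h d) :=
  strictMono_nat_of_lt_succ fun j => by
    have := id_le_iterate_of_id_le hh (j + 1) (scale h d j)
    simp only [scale, id] at this ⊢
    omega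

theorem iterate_le_scale_succ (hh : Monotone h) (hid : id ≤ h) (hi : i ≤ j + 1)
    (hx : x ≤ scale h d j) : h^[i] x ≤ scale h d (j + 1) :=
  calc h^[i] x ≤ h^[j + 1] x := monotone_iterate_of_id_le hid hi x
    _ ≤ h^[j + 1] (scale h d j) := hh.iterate _ hx
    _ ≤ scale h d (j + 1) := by simp only [scale]; omega

theorem apply_succ_lt_scale (hj : 0 < j) : d (j + 1) < scale h d j := by
  obtain ⟨i, rfl⟩ := Nat.exists_eq_succ_of_ne_zero hj.ne'
  show d (i + 2) < scale h d (i + 1)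
  simp only [scale]
  omega

theorem apply_mul_add_three_lt_scale (hj : 0 < j) : d (j * (j + 3)) < scale h d j := by
  obtain ⟨i, rfl⟩ := Nat.exists_eq_succ_of_ne_zero hj.ne'
  show d ((i + 1) * (i + 4)) < scale h d (i + 1)
  simp only [scale]
  omega

end Scale

section Density

variable {h g d : ℕ → ℕ}

theorem diagIterate_le_of_scale_one_lt (hh : id ≤ h)
    (hd : ∀ k, 1 ≤ k → ∀ n, d k < n → g^[k] n ≤ h n) {x : ℕ} (hx : scale h d 1 < x) :
    diagIterate g (slowInv (scale h d)) x ≤ h x := by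
  have hj : 1 ≤ slowInv (scale h d) x := le_slowInv (strictMono_scale hh) hx
  exact hd _ (Nat.le_add_left 1 _) x
    ((apply_succ_lt_scale hj).trans (apply_slowInv_lt (Nat.one_le_iff_ne_zero.mp hj)))

theorem diagIterate_slowInv_dominatesIterates (hid : id ≤ g) {H : ℕ → ℕ} (hH : StrictMono H)
    (hHc : Computable H) : DominatesIterates (diagIterate g (slowInv H)) g :=
  ⟨H, hHc, fun _ _ n hn =>
    monotone_iterate_of_id_le hid ((le_slowInv hH hn).trans (Nat.le_succ _)) n⟩

theorem dominatesIterates_diagIterate_slowInv_scale (hh : MemQ h) (hg : MemQ g)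
    (hdc : Computable d) (hd : ∀ k, 1 ≤ k → ∀ n, d k < n → g^[k] n ≤ h n) :
    DominatesIterates h (diagIterate g (slowInv (scale h d))) := by
  refine ⟨fun k => scale h d (k + 2),
    (computable_scale hh.1 hdc).comp (Computable.succ.comp Computable.succ), fun k _ n hn => ?_⟩
  set H := scale h d
  set f := diagIterate g (slowInv H)
  set j := slowInv H n
  have hH : StrictMono H := strictMono_scale hh.id_le
  have hkj : k + 2 ≤ j := le_slowInv hH hn
  have hjn : H j < n := apply_slowInv_lt (by omega)
  have hfh : ∀ x ∈ Set.Ici n, f x ≤ h x := fun x hx =>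
    diagIterate_le_of_scale_one_lt hh.id_le hd
      ((hH.monotone (by omega : 1 ≤ j)).trans_lt (hjn.trans_le hx))
  have horbit : ∀ i < k, slowInv H (f^[i] n) < j + 3 := fun i hi =>
    Nat.lt_succ_of_le <| slowInv_le hH.monotone <|
      calc f^[i] n ≤ h^[i] n :=
            iterate_le_iterate_of_le_on_Ici hh.2.1 (id_le_diagIterate hg.id_le) hfh i
        _ ≤ H (j + 2) := iterate_le_scale_succ hh.2.1 hh.id_le (by omega)
            (le_apply_slowInv_succ hH n)
  calc f^[k] n ≤ g^[k * (j + 3)] n := iterate_diagIterate_le hg.2.1 hg.id_le horbit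
    _ ≤ g^[j * (j + 3)] n :=
        monotone_iterate_of_id_le hg.id_le (Nat.mul_le_mul_right _ (by omega)) n
    _ ≤ h n := hd _ (Nat.mul_pos (by omega) (by omega)) n
        ((apply_mul_add_three_lt_scale (by omega)).trans hjn)

end Density

/-- Density of `≫` on `Q`: for all `h, g ∈ Q` with `h ≫ g` there is `f ∈ Q`
with `h ≫ f ≫ g`. -/
theorem density_of_dominates_iterates (h g : ℕ → ℕ) (hh : MemQ h) (hg : MemQ g)
    (hgg : DominatesIterates h g) :
    ∃ f : ℕ → ℕ, MemQ f ∧ DominatesIterates h f ∧ DominatesIterates f g := by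
  obtain ⟨d, hdc, hd⟩ := hgg
  have hH : StrictMono (scale h d) := strictMono_scale hh.id_le
  have hHc : Computable (scale h d) := computable_scale hh.1 hdc
  exact ⟨diagIterate g (slowInv (scale h d)),
    memQ_diagIterate hg (computable_slowInv hHc) slowInv_mono,
    dominatesIterates_diagIterate_slowInv_scale hh hg hdc hd,
    diagIterate_slowInv_dominatesIterates hg.id_le hH hHc⟩
end

section
/- (Big subset property) Let h and g be bounding functions, let B and C be sets of strings, and let σ be a string. If B ∪ C is (h+g)-big above σ, then either B is h-big above σ or C is g-big above σ. -/
/-- Strings: finite sequences of natural numbers. -/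
abbrev Str := List ℕ

/-- The set of strings extending some element of `A`  (`A^≼`). -/
def above (A : Set Str) : Set Str := {τ | ∃ σ ∈ A, σ <+: τ}

/-- A set of strings is prefix-free if its elements are pairwise incomparable. -/
def PrefixFree (A : Set Str) : Prop := ∀ σ ∈ A, ∀ τ ∈ A, σ <+: τ → σ = τ

/-- `T` is a tree above `σ`: a nonempty set of extensions of `σ` closed under
initial segments extending `σ`. -/
def IsTreeAbove (σ : Str) (T : Set Str) : Prop :=
  T.Nonempty ∧ (∀ τ ∈ T, σ <+: τ) ∧ ∀ τ ∈ T, ∀ ρ : Str, σ <+: ρ → ρ <+: τ → ρ ∈ T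

/-- `T` is a forest above the prefix-free set `A`: `T ⊆ A^≼` contains `A`, and
for each `σ ∈ A`, `T ∩ σ^≼` is a tree above `σ`. -/
def IsForestAbove (A T : Set Str) : Prop :=
  A ⊆ T ∧ T ⊆ above A ∧ ∀ σ ∈ A, IsTreeAbove σ (T ∩ {τ | σ <+: τ})

/-- `τ` is a leaf (a maximal element) of `T`. -/
def IsLeaf (T : Set Str) (τ : Str) : Prop := τ ∈ T ∧ ∀ ρ ∈ T, τ <+: ρ → ρ = τ

/-- `T` is `h`-bushy: every non-leaf `τ ∈ T` has at least `h |τ|` immediate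
successors on `T`. -/
def Bushy (h : ℕ → ℕ) (T : Set Str) : Prop :=
  ∀ τ ∈ T, ¬ IsLeaf T τ →
    h τ.length ≤ {ρ ∈ T | τ <+: ρ ∧ ρ.length = τ.length + 1}.ncard

/-- `B` is `h`-big above the finite prefix-free set `A`: some finite `h`-bushy
forest above `A` has all of its leaves in `B`. -/
def BigAboveF (h : ℕ → ℕ) (A B : Set Str) : Prop :=
  ∃ T : Set Str, T.Finite ∧ IsForestAbove A T ∧ Bushy h T ∧ ∀ τ : Str, IsLeaf T τ → τ ∈ B

/-- `B` is `h`-big above an arbitrary set `A` of strings: `B` is `h`-big above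
every finite prefix-free subset of `A`. -/
def BigAbove (h : ℕ → ℕ) (A B : Set Str) : Prop :=
  ∀ A' : Set Str, A' ⊆ A → A'.Finite → PrefixFree A' → BigAboveF h A' B

/-- A bounding function: a computable function into `[2, ∞)`. -/
def Bounding (h : ℕ → ℕ) : Prop := Computable h ∧ ∀ n, 2 ≤ h n

/-- The forest `R` is an end-extension of the forest `S`: every string in
`R ∖ S` extends some leaf of `S`. -/
def EndExt (S R : Set Str) : Prop :=
  S ⊆ R ∧ ∀ τ ∈ R, τ ∉ S → ∃ ρ : Str, IsLeaf S ρ ∧ ρ <+: τ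

/-!
Induct on a finite `(h+g)`-bushy tree for `B ∪ C` from the leaves up, showing that every node
`τ` has `B` `h`-big or `C` `g`-big above it. A leaf lies in `B` or in `C`. At an inner node the
at least `h |τ| + g |τ|` children split into those of the first kind and those of the second,
so (by counting) one kind is nonempty and has at least `h |τ|` resp. `g |τ|` members, and
grafting their witnessing trees onto `τ` gives a witness for `τ`.
-/

def children (T : Set Str) (τ : Str) : Set Str :=
  {ρ ∈ T | τ <+: ρ ∧ ρ.length = τ.length + 1}

lemma List.IsPrefix.eq_of_prefix_of_length_eq {l₁ l₂ l : Str} (h₁ : l₁ <+: l) (h₂ : l₂ <+: l)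
    (hlen : l₁.length = l₂.length) : l₁ = l₂ :=
  (List.prefix_of_prefix_length_le h₁ h₂ hlen.le).eq_of_length hlen

theorem IsTreeAbove.mem_root {σ : Str} {T : Set Str} (hT : IsTreeAbove σ T) : σ ∈ T := by
  obtain ⟨⟨τ, hτ⟩, hext, hclosed⟩ := hT
  exact hclosed τ hτ σ List.prefix_rfl (hext τ hτ)

theorem IsTreeAbove.children_nonempty {σ τ : Str} {T : Set Str} (hT : IsTreeAbove σ T)
    (hτ : τ ∈ T) (hleaf : ¬ IsLeaf T τ) : (children T τ).Nonempty := by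
  obtain ⟨ρ, hρ, hτρ, hne⟩ : ∃ ρ ∈ T, τ <+: ρ ∧ ρ ≠ τ := by
    simpa [IsLeaf, hτ] using hleaf
  have hlen : τ.length < ρ.length :=
    hτρ.length_le.lt_of_ne fun h => hne (hτρ.eq_of_length h).symm
  have hτ_take : τ <+: ρ.take (τ.length + 1) := List.prefix_take_iff.2 ⟨hτρ, by omega⟩
  refine ⟨ρ.take (τ.length + 1), ?_, hτ_take, by simp; omega⟩
  exact hT.2.2 ρ hρ _ ((hT.2.1 τ hτ).trans hτ_take) (List.take_prefix _ _)

theorem isForestAbove_singleton_iff {σ : Str} {T : Set Str} :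
    IsForestAbove {σ} T ↔ IsTreeAbove σ T := by
  constructor
  · rintro ⟨-, hsub, htree⟩
    have hext : ∀ τ ∈ T, σ <+: τ := by
      intro τ hτ
      obtain ⟨_, rfl, hστ⟩ := hsub hτ
      exact hστ
    have htree := htree σ rfl
    rwa [Set.inter_eq_self_of_subset_left (t := {τ | σ <+: τ}) hext] at htree
  · intro hT
    refine ⟨Set.singleton_subset_iff.2 hT.mem_root, fun τ hτ => ⟨σ, rfl, hT.2.1 τ hτ⟩, ?_⟩
    intro σ' hσ'
    rw [Set.mem_singleton_iff.1 hσ', Set.inter_eq_self_of_subset_left (t := {τ | σ <+: τ}) hT.2.1]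
    exact hT

theorem bigAboveF_singleton_iff {h : ℕ → ℕ} {σ : Str} {B : Set Str} :
    BigAboveF h {σ} B ↔
      ∃ T : Set Str, T.Finite ∧ IsTreeAbove σ T ∧ Bushy h T ∧ ∀ τ, IsLeaf T τ → τ ∈ B := by
  simp only [BigAboveF, isForestAbove_singleton_iff]

theorem bigAboveF_singleton_of_mem (h : ℕ → ℕ) {B : Set Str} {σ : Str} (hσ : σ ∈ B) :
    BigAboveF h {σ} B := by
  refine bigAboveF_singleton_iff.2 ⟨{σ}, Set.finite_singleton σ, ?_, ?_, ?_⟩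
  · refine ⟨Set.singleton_nonempty σ, fun τ hτ => hτ ▸ List.prefix_rfl, ?_⟩
    rintro τ rfl ρ hσρ hρσ
    exact hρσ.eq_of_length (le_antisymm hρσ.length_le hσρ.length_le)
  · rintro τ rfl hτ
    exact absurd ⟨rfl, fun ρ hρ _ => hρ⟩ hτ
  · rintro τ ⟨rfl, -⟩
    exact hσ

theorem Set.Finite.forall_of_forall_children {T : Set Str} (hT : T.Finite) {P : Str → Prop}
    (step : ∀ τ ∈ T, (∀ ρ ∈ children T τ, P ρ) → P τ) : ∀ τ ∈ T, P τ := by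
  obtain ⟨N, hN⟩ := (hT.image List.length).bddAbove
  suffices ∀ n, ∀ τ ∈ T, N - τ.length ≤ n → P τ from fun τ hτ => this _ τ hτ le_rfl
  intro n
  induction n with
  | zero =>
    intro τ hτ hτN
    refine step τ hτ fun ρ ⟨hρ, _, hlen⟩ => ?_
    have := hN ⟨ρ, hρ, rfl⟩
    omega
  | succ n ih =>
    intro τ hτ hτN
    exact step τ hτ fun ρ ⟨hρ, _, hlen⟩ => ih ρ hρ (by omega)

theorem le_ncard_sep_or_le_ncard_sep {α : Type*} {K : Set α} {p q : α → Prop} {a b : ℕ}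
    (hK : K.Nonempty) (hpq : ∀ x ∈ K, p x ∨ q x) (hcard : a + b ≤ K.ncard) :
    ({x ∈ K | p x}.Nonempty ∧ a ≤ {x ∈ K | p x}.ncard) ∨
      ({x ∈ K | q x}.Nonempty ∧ b ≤ {x ∈ K | q x}.ncard) := by
  have hunion : K = {x ∈ K | p x} ∪ {x ∈ K | q x} :=
    Set.ext fun x => ⟨fun hx => (hpq x hx).imp (⟨hx, ·⟩) (⟨hx, ·⟩),
      by rintro (⟨hx, -⟩ | ⟨hx, -⟩) <;> exact hx⟩
  have hle : K.ncard ≤ {x ∈ K | p x}.ncard + {x ∈ K | q x}.ncard :=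
    (congrArg Set.ncard hunion).trans_le (Set.ncard_union_le _ _)
  rcases Set.eq_empty_or_nonempty {x ∈ K | p x} with hp | hp
  · rw [hp, Set.empty_union] at hunion
    rw [hp, Set.ncard_empty] at hle
    exact Or.inr ⟨hunion ▸ hK, by omega⟩
  · by_cases ha : a ≤ {x ∈ K | p x}.ncard
    · exact Or.inl ⟨hp, ha⟩
    · exact Or.inr ⟨Set.nonempty_of_ncard_ne_zero (by omega), by omega⟩

def graft (τ : Str) (S : Set Str) (F : Str → Set Str) : Set Str :=
  insert τ (⋃ ρ ∈ S, F ρ)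

section Graft

variable {τ : Str} {S : Set Str} {F : Str → Set Str}

theorem mem_graft_iff {x : Str} : x ∈ graft τ S F ↔ x = τ ∨ ∃ ρ ∈ S, x ∈ F ρ := by
  simp only [graft, Set.mem_insert_iff, Set.mem_iUnion, exists_prop]

theorem subset_graft {ρ : Str} (hρ : ρ ∈ S) : F ρ ⊆ graft τ S F :=
  fun _ hx => mem_graft_iff.2 (Or.inr ⟨ρ, hρ, hx⟩)

theorem graft_finite (hS : S.Finite) (hF : ∀ ρ ∈ S, (F ρ).Finite) : (graft τ S F).Finite :=
  (hS.biUnion hF).insert τ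

variable (hS : ∀ ρ ∈ S, τ <+: ρ ∧ ρ.length = τ.length + 1) (hF : ∀ ρ ∈ S, IsTreeAbove ρ (F ρ))
include hS hF

/-- The grafted trees are disjoint and closed upwards inside the graft, since their roots are
distinct strings of the same length. -/
theorem mem_of_prefix_of_mem_graft {ρ x y : Str} (hρ : ρ ∈ S) (hx : x ∈ F ρ)
    (hy : y ∈ graft τ S F) (hxy : x <+: y) : y ∈ F ρ := by
  have hρx := (hF ρ hρ).2.1 x hx
  rcases mem_graft_iff.1 hy with rfl | ⟨ρ', hρ', hy'⟩
  · have := (hρx.trans hxy).length_le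
    have := (hS ρ hρ).2
    omega
  · have hρρ' : ρ = ρ' := List.IsPrefix.eq_of_prefix_of_length_eq (hρx.trans hxy)
      ((hF ρ' hρ').2.1 y hy') (by rw [(hS ρ hρ).2, (hS ρ' hρ').2])
    exact hρρ' ▸ hy'

theorem isTreeAbove_graft : IsTreeAbove τ (graft τ S F) := by
  refine ⟨⟨τ, Set.mem_insert τ _⟩, fun x hx => ?_, fun x hx π hτπ hπx => ?_⟩
  · rcases mem_graft_iff.1 hx with rfl | ⟨ρ, hρ, hxρ⟩
    · exact List.prefix_rfl
    · exact (hS ρ hρ).1.trans ((hF ρ hρ).2.1 x hxρ)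
  rcases mem_graft_iff.1 hx with rfl | ⟨ρ, hρ, hxρ⟩
  · rw [hπx.eq_of_length (le_antisymm hπx.length_le hτπ.length_le)]
    exact hx
  have hρx := (hF ρ hρ).2.1 x hxρ
  rcases List.prefix_or_prefix_of_prefix hπx hρx with hπρ | hρπ
  · have := hπρ.length_le
    have := (hS ρ hρ).2
    rcases Nat.lt_or_ge π.length ρ.length with hlt | hge
    · rw [← hτπ.eq_of_length (by have := hτπ.length_le; omega)]
      exact Set.mem_insert τ _
    · rw [hπρ.eq_of_length (by omega)]
      exact subset_graft hρ (hF ρ hρ).mem_root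
  · exact subset_graft hρ ((hF ρ hρ).2.2 x hxρ π hρπ hπx)

theorem children_graft_self : children (graft τ S F) τ = S := by
  refine Set.Subset.antisymm (fun y ⟨hy, hτy, hlen⟩ => ?_) fun ρ hρ =>
    ⟨subset_graft hρ (hF ρ hρ).mem_root, hS ρ hρ⟩
  rcases mem_graft_iff.1 hy with rfl | ⟨ρ, hρ, hyρ⟩
  · omega
  · have hρy := (hF ρ hρ).2.1 y hyρ
    rw [← hρy.eq_of_length (by rw [hlen, (hS ρ hρ).2])]
    exact hρ

theorem children_graft_of_mem {ρ x : Str} (hρ : ρ ∈ S) (hx : x ∈ F ρ) :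
    children (graft τ S F) x = children (F ρ) x :=
  Set.Subset.antisymm
    (fun _ ⟨hy, hxy⟩ => ⟨mem_of_prefix_of_mem_graft hS hF hρ hx hy hxy.1, hxy⟩)
    (fun _ ⟨hy, hxy⟩ => ⟨subset_graft hρ hy, hxy⟩)

theorem isLeaf_graft_iff {ρ x : Str} (hρ : ρ ∈ S) (hx : x ∈ F ρ) :
    IsLeaf (graft τ S F) x ↔ IsLeaf (F ρ) x :=
  ⟨fun ⟨_, hmax⟩ => ⟨hx, fun y hy hxy => hmax y (subset_graft hρ hy) hxy⟩,
    fun ⟨_, hmax⟩ => ⟨subset_graft hρ hx,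
      fun y hy hxy => hmax y (mem_of_prefix_of_mem_graft hS hF hρ hx hy hxy) hxy⟩⟩

theorem bushy_graft {h : ℕ → ℕ} (hτ : h τ.length ≤ S.ncard) (hbushy : ∀ ρ ∈ S, Bushy h (F ρ)) :
    Bushy h (graft τ S F) := by
  intro x hx hleaf
  change h x.length ≤ (children _ x).ncard
  rcases mem_graft_iff.1 hx with rfl | ⟨ρ, hρ, hxρ⟩
  · rwa [children_graft_self hS hF]
  · rw [isLeaf_graft_iff hS hF hρ hxρ] at hleaf
    rw [children_graft_of_mem hS hF hρ hxρ]
    exact hbushy ρ hρ x hxρ hleaf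

theorem exists_isLeaf_of_isLeaf_graft (hSne : S.Nonempty) {x : Str}
    (hx : IsLeaf (graft τ S F) x) : ∃ ρ ∈ S, IsLeaf (F ρ) x := by
  rcases mem_graft_iff.1 hx.1 with rfl | ⟨ρ, hρ, hxρ⟩
  · obtain ⟨ρ, hρ⟩ := hSne
    have hρx := hx.2 ρ (subset_graft hρ (hF ρ hρ).mem_root) (hS ρ hρ).1
    have := (hS ρ hρ).2
    rw [hρx] at this
    omega
  · exact ⟨ρ, hρ, (isLeaf_graft_iff hS hF hρ hxρ).1 hx⟩

end Graft

theorem bigAboveF_of_children {h : ℕ → ℕ} {B S : Set Str} {τ : Str} (hSfin : S.Finite)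
    (hSne : S.Nonempty) (hS : ∀ ρ ∈ S, τ <+: ρ ∧ ρ.length = τ.length + 1)
    (hτ : h τ.length ≤ S.ncard) (hbig : ∀ ρ ∈ S, BigAboveF h {ρ} B) : BigAboveF h {τ} B := by
  simp only [bigAboveF_singleton_iff] at hbig ⊢
  choose! F hFfin hF hFbushy hFleaf using hbig
  refine ⟨graft τ S F, graft_finite hSfin hFfin, isTreeAbove_graft hS hF,
    bushy_graft hS hF hτ hFbushy, fun x hx => ?_⟩
  obtain ⟨ρ, hρ, hxρ⟩ := exists_isLeaf_of_isLeaf_graft hS hF hSne hx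
  exact hFleaf ρ hρ x hxρ

theorem bigAboveF_or_of_children {h g : ℕ → ℕ} {B C K : Set Str} {τ : Str} (hKfin : K.Finite)
    (hKne : K.Nonempty) (hK : ∀ ρ ∈ K, τ <+: ρ ∧ ρ.length = τ.length + 1)
    (hcard : h τ.length + g τ.length ≤ K.ncard)
    (hbig : ∀ ρ ∈ K, BigAboveF h {ρ} B ∨ BigAboveF g {ρ} C) :
    BigAboveF h {τ} B ∨ BigAboveF g {τ} C := by
  rcases le_ncard_sep_or_le_ncard_sep hKne hbig hcard with ⟨hne, hle⟩ | ⟨hne, hle⟩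
  · exact Or.inl <| bigAboveF_of_children (hKfin.subset (Set.sep_subset _ _)) hne
      (fun ρ hρ => hK ρ hρ.1) hle fun ρ hρ => hρ.2
  · exact Or.inr <| bigAboveF_of_children (hKfin.subset (Set.sep_subset _ _)) hne
      (fun ρ hρ => hK ρ hρ.1) hle fun ρ hρ => hρ.2

theorem big_subset_property_general (h g : ℕ → ℕ)
    (B C : Set Str) (σ : Str)
    (hbig : BigAboveF (fun n => h n + g n) {σ} (B ∪ C)) :
    BigAboveF h {σ} B ∨ BigAboveF g {σ} C := by
  obtain ⟨T, hTfin, hT, hbushy, hleaves⟩ := bigAboveF_singleton_iff.1 hbig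
  refine hTfin.forall_of_forall_children
    (P := fun τ => BigAboveF h {τ} B ∨ BigAboveF g {τ} C) (fun τ hτ ih => ?_) σ hT.mem_root
  by_cases hleaf : IsLeaf T τ
  · exact (hleaves τ hleaf).imp (bigAboveF_singleton_of_mem h) (bigAboveF_singleton_of_mem g)
  · exact bigAboveF_or_of_children (hTfin.subset (Set.sep_subset _ _))
      (hT.children_nonempty hτ hleaf) (fun ρ hρ => hρ.2) (hbushy τ hτ hleaf) ih

/-- Big subset property: if `B ∪ C` is `(h+g)`-big above the string `σ`, then
`B` is `h`-big above `σ` or `C` is `g`-big above `σ`. -/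
theorem big_subset_property (h g : ℕ → ℕ) (hh : Bounding h) (hg : Bounding g)
    (B C : Set Str) (σ : Str)
    (hbig : BigAboveF (fun n => h n + g n) {σ} (B ∪ C)) :
    BigAboveF h {σ} B ∨ BigAboveF g {σ} C :=
  big_subset_property_general h g B C σ hbig
end

section
/- Let A be a finite prefix-free set of pairs of strings, let g and h be bounding functions, and let B be a set of pairs of strings. Then the following are equivalent: (1) there is a finite (g,h)-bushy forest system above A all of whose leaves lie in B; (2) the set of strings τ such that B(τ) is h-big above A(τ⁻) is g-big above dom A, where τ⁻ denotes the unique element of dom A that τ extends. -/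
/-- The section `T(τ) = {ρ : (τ, ρ) ∈ T}` of a set of pairs of strings. -/
def sec (T : Set (Str × Str)) (τ : Str) : Set Str := {ρ | (τ, ρ) ∈ T}

/-- The domain `{τ : T(τ) ≠ ∅}` of a set of pairs of strings. -/
def domP (T : Set (Str × Str)) : Set Str := {τ | ∃ ρ, (τ, ρ) ∈ T}

/-- A set of pairs of strings is prefix-free if its domain is prefix-free and
each of its sections is prefix-free. -/
def PrefixFree2 (A : Set (Str × Str)) : Prop :=
  PrefixFree (domP A) ∧ ∀ τ ∈ domP A, PrefixFree (sec A τ)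

/-- A length-2 forest system above the finite prefix-free set `A` of pairs of
strings: `dom T` is a forest above `dom A`; for every `τ ∈ dom T`, `T(τ)` is a
finite forest above `A(τ⁻)`, where `τ⁻` is the (unique) element of `dom A` that
`τ` extends; and `T(τ')` end-extends `T(τ)` whenever `τ ≼ τ'` in `dom T`. -/
def IsForestSys (A T : Set (Str × Str)) : Prop :=
  IsForestAbove (domP A) (domP T) ∧
  (∀ τ ∈ domP T, (sec T τ).Finite ∧
    ∀ σ ∈ domP A, σ <+: τ → IsForestAbove (sec A σ) (sec T τ)) ∧
  ∀ τ ∈ domP T, ∀ τ' ∈ domP T, τ <+: τ' → EndExt (sec T τ) (sec T τ')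

/-- A forest system is `(g, h)`-bushy if its domain is `g`-bushy and each of its
sections is `h`-bushy. -/
def Bushy2 (g h : ℕ → ℕ) (T : Set (Str × Str)) : Prop :=
  Bushy g (domP T) ∧ ∀ τ ∈ domP T, Bushy h (sec T τ)

/-- A leaf of a forest system: a pair `(τ, ρ)` with `τ` a leaf of `dom T` and
`ρ` a leaf of `T(τ)`. -/
def IsLeaf2 (T : Set (Str × Str)) (p : Str × Str) : Prop :=
  IsLeaf (domP T) p.1 ∧ IsLeaf (sec T p.1) p.2

/-- `B` is `(g, h)`-big above the finite prefix-free set `A` of pairs of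
strings: some finite `(g, h)`-bushy forest system above `A` has all of its
leaves in `B`. -/
def BigAboveF2 (g h : ℕ → ℕ) (A B : Set (Str × Str)) : Prop :=
  ∃ T : Set (Str × Str), T.Finite ∧ IsForestSys A T ∧ Bushy2 g h T ∧
    ∀ p : Str × Str, IsLeaf2 T p → p ∈ B

/-- `B` is `(g, h)`-big above an arbitrary set `A` of pairs of strings: `B` is
`(g, h)`-big above every finite prefix-free subset of `A`. -/
def BigAbove2 (g h : ℕ → ℕ) (A B : Set (Str × Str)) : Prop :=
  ∀ A' : Set (Str × Str), A' ⊆ A → A'.Finite → PrefixFree2 A' → BigAboveF2 g h A' B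

/-- A set of pairs of strings is open if it is upwards closed under
coordinatewise extension. -/
def Open2 (C : Set (Str × Str)) : Prop :=
  ∀ p ∈ C, ∀ q : Str × Str, p.1 <+: q.1 → p.2 <+: q.2 → q ∈ C

/-!
Direction (1) ⇒ (2): the domain of a forest system witnessing (1) is a `g`-bushy forest above
`dom A`, and at each of its leaves `τ` the section `T(τ)` witnesses that `B(τ)` is `h`-big above
`A(τ⁻)`.

Direction (2) ⇒ (1): glue the witnesses together. Over a `g`-bushy forest `S` witnessing (2),
put at every leaf `τ` of `S` a forest witnessing that `B(τ)` is `h`-big above `A(τ⁻)`, and at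
every inner node `τ` just the prefix-free set `A(τ⁻)` itself, a forest with no inner nodes
(hence vacuously `h`-bushy) that is end-extended by every forest above it.
-/

/-- The paper's `A(τ⁻)`: when `dom A` is prefix-free, at most one `σ` contributes. -/
def secRoot (A : Set (Str × Str)) (τ : Str) : Set Str := {ρ | ∃ σ, σ <+: τ ∧ (σ, ρ) ∈ A}

def pairsOver (S : Set Str) (F : Str → Set Str) : Set (Str × Str) := {p | p.1 ∈ S ∧ p.2 ∈ F p.1}

section PrefixFree

variable {D : Set Str}

theorem PrefixFree.eq_of_prefix (hD : PrefixFree D) {σ σ' τ : Str} (hσ : σ ∈ D) (hσ' : σ' ∈ D)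
    (hστ : σ <+: τ) (hσ'τ : σ' <+: τ) : σ = σ' := by
  rcases List.prefix_or_prefix_of_prefix hστ hσ'τ with h | h
  · exact hD σ hσ σ' hσ' h
  · exact (hD σ' hσ' σ hσ h).symm

theorem PrefixFree.isLeaf (hD : PrefixFree D) {σ : Str} (hσ : σ ∈ D) : IsLeaf D σ :=
  ⟨hσ, fun ρ hρ hσρ => (hD σ hσ ρ hρ hσρ).symm⟩

theorem PrefixFree.bushy (hD : PrefixFree D) (f : ℕ → ℕ) : Bushy f D :=
  fun _ hτ hnotLeaf => absurd (hD.isLeaf hτ) hnotLeaf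

theorem PrefixFree.isForestAbove_self (hD : PrefixFree D) : IsForestAbove D D := by
  refine ⟨subset_rfl, fun τ hτ => ⟨τ, hτ, List.prefix_refl τ⟩, fun σ hσ => ?_⟩
  refine ⟨⟨σ, hσ, List.prefix_refl σ⟩, fun τ hτ => hτ.2, ?_⟩
  rintro τ ⟨hτ, hστ⟩ ρ hσρ hρτ
  obtain rfl : σ = τ := hD σ hσ τ hτ hστ
  obtain rfl : ρ = σ := hρτ.eq_of_length_le hσρ.length_le
  exact ⟨hσ, List.prefix_refl ρ⟩

theorem PrefixFree.endExt {F : Set Str} (hD : PrefixFree D) (hF : IsForestAbove D F) :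
    EndExt D F := by
  refine ⟨hF.1, fun τ hτ _ => ?_⟩
  obtain ⟨σ, hσ, hστ⟩ := hF.2.1 hτ
  exact ⟨σ, hD.isLeaf hσ, hστ⟩

end PrefixFree

theorem EndExt.refl (S : Set Str) : EndExt S S :=
  ⟨subset_rfl, fun _ hτ hτS => absurd hτ hτS⟩

theorem Set.Finite.sec {T : Set (Str × Str)} (hT : T.Finite) (τ : Str) : (sec T τ).Finite :=
  (hT.image Prod.snd).subset fun ρ hρ => ⟨(τ, ρ), hρ, rfl⟩

theorem Set.Finite.domP {T : Set (Str × Str)} (hT : T.Finite) : (domP T).Finite :=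
  (hT.image Prod.fst).subset fun τ ⟨ρ, hρ⟩ => ⟨(τ, ρ), hρ, rfl⟩

theorem secRoot_eq {A : Set (Str × Str)} (hA : PrefixFree (domP A)) {σ τ : Str}
    (hσ : σ ∈ domP A) (hστ : σ <+: τ) : secRoot A τ = sec A σ := by
  ext ρ
  constructor
  · rintro ⟨σ', hσ'τ, hσ'ρ⟩
    rwa [hA.eq_of_prefix hσ ⟨ρ, hσ'ρ⟩ hστ hσ'τ]
  · exact fun hσρ => ⟨σ, hστ, hσρ⟩

section pairsOver

variable {S : Set Str} {F : Str → Set Str}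

theorem sec_pairsOver {τ : Str} (hτ : τ ∈ S) : sec (pairsOver S F) τ = F τ := by
  ext ρ
  exact and_iff_right hτ

theorem domP_pairsOver (hF : ∀ τ ∈ S, (F τ).Nonempty) : domP (pairsOver S F) = S := by
  ext τ
  refine ⟨fun ⟨_, hτ, _⟩ => hτ, fun hτ => ?_⟩
  obtain ⟨ρ, hρ⟩ := hF τ hτ
  exact ⟨ρ, hτ, hρ⟩

theorem Set.Finite.pairsOver (hS : S.Finite) (hF : ∀ τ ∈ S, (F τ).Finite) :
    (pairsOver S F).Finite :=
  (hS.biUnion fun τ hτ => (hF τ hτ).image (Prod.mk τ)).subset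
    fun p ⟨hp₁, hp₂⟩ => Set.mem_biUnion hp₁ ⟨p.2, hp₂, rfl⟩

theorem isForestSys_pairsOver {A : Set (Str × Str)} (hA : PrefixFree2 A)
    (hS : IsForestAbove (domP A) S)
    (hF : ∀ τ ∈ S, (F τ).Finite ∧ IsForestAbove (secRoot A τ) (F τ))
    (hinner : ∀ τ ∈ S, ¬ IsLeaf S τ → F τ = secRoot A τ) :
    domP (pairsOver S F) = S ∧ IsForestSys A (pairsOver S F) := by
  have hroot : ∀ τ ∈ S, ∃ σ ∈ domP A, σ <+: τ ∧ secRoot A τ = sec A σ := fun τ hτ => by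
    obtain ⟨σ, hσ, hστ⟩ := hS.2.1 hτ
    exact ⟨σ, hσ, hστ, secRoot_eq hA.1 hσ hστ⟩
  have hdom : domP (pairsOver S F) = S := domP_pairsOver fun τ hτ => by
    obtain ⟨σ, ⟨ρ, hσρ⟩, hστ, -⟩ := hroot τ hτ
    exact ⟨ρ, (hF τ hτ).2.1 ⟨σ, hστ, hσρ⟩⟩
  refine ⟨hdom, by rwa [hdom], fun τ hτ => ?_, fun τ hτ τ' hτ' hττ' => ?_⟩ <;> rw [hdom] at hτ
  · rw [sec_pairsOver hτ]
    refine ⟨(hF τ hτ).1, fun σ hσ hστ => ?_⟩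
    rw [← secRoot_eq hA.1 hσ hστ]
    exact (hF τ hτ).2
  · rw [hdom] at hτ'
    rw [sec_pairsOver hτ, sec_pairsOver hτ']
    by_cases hleaf : IsLeaf S τ
    · rw [hleaf.2 τ' hτ' hττ']
      exact EndExt.refl _
    · obtain ⟨σ, hσ, hστ, hsec⟩ := hroot τ hτ
      have hsec' : secRoot A τ' = sec A σ := secRoot_eq hA.1 hσ (hστ.trans hττ')
      rw [hinner τ hτ hleaf, hsec]
      exact (hA.2 σ hσ).endExt (hsec' ▸ (hF τ' hτ').2)

end pairsOver

theorem BigAboveF2.bigAboveF_domP {g h : ℕ → ℕ} {A B : Set (Str × Str)}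
    (hAB : BigAboveF2 g h A B) :
    BigAboveF g (domP A) {τ | ∃ σ ∈ domP A, σ <+: τ ∧ BigAboveF h (sec A σ) (sec B τ)} := by
  obtain ⟨T, hTfin, ⟨hdom, hsec, -⟩, ⟨hdomBushy, hsecBushy⟩, hleaves⟩ := hAB
  refine ⟨domP T, hTfin.domP, hdom, hdomBushy, fun τ hτ => ?_⟩
  obtain ⟨σ, hσ, hστ⟩ := hdom.2.1 hτ.1
  exact ⟨σ, hσ, hστ, sec T τ, (hsec τ hτ.1).1, (hsec τ hτ.1).2 σ hσ hστ, hsecBushy τ hτ.1,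
    fun ρ hρ => hleaves (τ, ρ) ⟨hτ, hρ⟩⟩

theorem bigAboveF2_of_bigAboveF_secRoot {g h : ℕ → ℕ} {A B : Set (Str × Str)}
    (hAfin : A.Finite) (hA : PrefixFree2 A)
    (hbig : BigAboveF g (domP A) {τ | BigAboveF h (secRoot A τ) (sec B τ)}) :
    BigAboveF2 g h A B := by
  classical
  obtain ⟨S, hSfin, hS, hSbushy, hSleaves⟩ := hbig
  choose W hWfin hWforest hWbushy hWleaves using hSleaves
  let F : Str → Set Str := fun τ => if hτ : IsLeaf S τ then W τ hτ else secRoot A τ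
  have hFleaf : ∀ τ (hτ : IsLeaf S τ), F τ = W τ hτ := fun τ hτ => dif_pos hτ
  have hFinner : ∀ τ ∈ S, ¬ IsLeaf S τ → F τ = secRoot A τ := fun τ _ hτ => dif_neg hτ
  have hFroot : ∀ τ ∈ S, ¬ IsLeaf S τ → (secRoot A τ).Finite ∧ PrefixFree (secRoot A τ) :=
    fun τ hτ _ => by
      obtain ⟨σ, hσ, hστ⟩ := hS.2.1 hτ
      rw [secRoot_eq hA.1 hσ hστ]
      exact ⟨hAfin.sec σ, hA.2 σ hσ⟩
  have hF : ∀ τ ∈ S, (F τ).Finite ∧ IsForestAbove (secRoot A τ) (F τ) ∧ Bushy h (F τ) :=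
    fun τ hτ => by
      by_cases hleaf : IsLeaf S τ
      · rw [hFleaf τ hleaf]
        exact ⟨hWfin τ hleaf, hWforest τ hleaf, hWbushy τ hleaf⟩
      · obtain ⟨hfin, hpf⟩ := hFroot τ hτ hleaf
        rw [hFinner τ hτ hleaf]
        exact ⟨hfin, hpf.isForestAbove_self, hpf.bushy h⟩
  obtain ⟨hdom, hsys⟩ := isForestSys_pairsOver hA hS (fun τ hτ => ⟨(hF τ hτ).1, (hF τ hτ).2.1⟩)
    hFinner
  refine ⟨pairsOver S F, hSfin.pairsOver fun τ hτ => (hF τ hτ).1, hsys,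
    ⟨by rwa [hdom], fun τ hτ => ?_⟩, fun ⟨τ, ρ⟩ ⟨hτ, hρ⟩ => ?_⟩
  · rw [hdom] at hτ
    rw [sec_pairsOver hτ]
    exact (hF τ hτ).2.2
  · rw [hdom] at hτ
    rw [sec_pairsOver hτ.1, hFleaf τ hτ] at hρ
    exact hWleaves τ hτ ρ hρ

theorem big_for_pairs_iff_projection_big_general (g h : ℕ → ℕ)
    (A : Set (Str × Str)) (hAfin : A.Finite) (hApf : PrefixFree2 A)
    (B : Set (Str × Str)) :
    BigAboveF2 g h A B ↔
      BigAboveF g (domP A)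
        {τ | ∃ σ ∈ domP A, σ <+: τ ∧ BigAboveF h (sec A σ) (sec B τ)} := by
  refine ⟨BigAboveF2.bigAboveF_domP, fun ⟨S, hSfin, hS, hSbushy, hSleaves⟩ => ?_⟩
  refine bigAboveF2_of_bigAboveF_secRoot hAfin hApf ⟨S, hSfin, hS, hSbushy, fun τ hτ => ?_⟩
  obtain ⟨σ, hσ, hστ, hbig⟩ := hSleaves τ hτ
  rwa [Set.mem_ofPred_eq, secRoot_eq hApf.1 hσ hστ]

/-- `B` is `(g, h)`-big above the finite prefix-free set `A` of pairs of
strings if and only if the set of strings `τ` such that `B(τ)` is `h`-big above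
`A(τ⁻)` is `g`-big above `dom A`. -/
theorem big_for_pairs_iff_projection_big (g h : ℕ → ℕ) (hg : Bounding g) (hh : Bounding h)
    (A : Set (Str × Str)) (hAfin : A.Finite) (hApf : PrefixFree2 A)
    (B : Set (Str × Str)) :
    BigAboveF2 g h A B ↔
      BigAboveF g (domP A)
        {τ | ∃ σ ∈ domP A, σ <+: τ ∧ BigAboveF h (sec A σ) (sec B τ)} :=
  big_for_pairs_iff_projection_big_general g h A hAfin hApf B
end
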